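/- arXiv:1707.00968 — 4 statements merged into one kernel-verified Lean document; each statement's English description precedes it below -/
import Mathlib

section
/- Under the hypotheses that E is T-universally complete with weak order unit e = Te, T strictly positive, and S a conditional expectation with TS = T = ST, for every f ∈ L²(T) one has (Sf)² ≤ S(f²). -/
/-!
Write `g = S f` and `D = g² - S(f²)`. Expanding `S((a f - b)²) ≥ 0` gives `a² D ≤ (a g - b)²` for
all integers `a, b`; only integer scalars are available here, as the product of `A` is not assumed
to be `ℝ`-bilinear. Minimising over an integer grid of values of `b`, with `(p ⊓ q)² = p² ⊓ q²` for
`p, q ≥ 0`, shows that `m² D ≤ 1` on the band where `|g| ≤ N`, for every `m`. `T`-universal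
completeness makes `E` Archimedean, so `D⁺` vanishes on each of these bands, and then everywhere
because `N ≤ N (N - |g|)⁺ + |g|`.
-/

open Finset

/-- The universal completion `E^u` of a Dedekind complete Riesz space with weak
order unit `e`, carrying its canonical `f`-algebra structure with `e = 1` the
multiplicative unit and weak order unit. The Riesz space `E` itself is modeled
as a Riesz subspace of `A`. -/
class FRieszSpace (A : Type*) extends CommRing A, Lattice A, Module ℝ A where
  add_le_add_left' : ∀ a b : A, a ≤ b → ∀ c : A, c + a ≤ c + b
  mul_nonneg' : ∀ a b : A, 0 ≤ a → 0 ≤ b → 0 ≤ a * b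
  smul_nonneg' : ∀ (r : ℝ) (a : A), 0 ≤ r → 0 ≤ a → 0 ≤ r • a
  inf_mul_orth : ∀ a b c : A, 0 ≤ c → a ⊓ b = 0 → (a * c) ⊓ b = 0
  one_weak_unit : ∀ a : A, (a ⊔ -a) ⊓ 1 = 0 → a = 0

variable {A : Type*} [FRieszSpace A]

/-- `E` is Dedekind complete: every nonempty subset of `E` bounded above in `E`
has a supremum in `E`. -/
def DedekindCompleteIn (E : Set A) : Prop :=
  ∀ S : Set A, S ⊆ E → S.Nonempty → (∃ b ∈ E, ∀ x ∈ S, x ≤ b) → ∃ a ∈ E, IsLUB S a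

/-- A Riesz subspace of `A` containing the weak order unit `1`. -/
structure IsRieszSubspace (E : Set A) : Prop where
  zero_mem : (0:A) ∈ E
  add_mem : ∀ x y : A, x ∈ E → y ∈ E → x + y ∈ E
  smul_mem : ∀ (r : ℝ) (x : A), x ∈ E → r • x ∈ E
  abs_mem : ∀ x : A, x ∈ E → (x ⊔ -x) ∈ E
  one_mem : (1:A) ∈ E

/-- A conditional expectation operator on `E`: a positive order continuous
linear projection fixing the weak order unit, with range a Riesz subspace. -/
structure IsCondExpOn (E : Set A) (T : A →ₗ[ℝ] A) : Prop where
  mapsTo : ∀ x ∈ E, T x ∈ E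
  positive : ∀ x : A, 0 ≤ x → 0 ≤ T x
  projection : ∀ x : A, T (T x) = T x
  unit : T 1 = 1
  range_abs : ∀ x : A, ∃ y : A, T y = (T x) ⊔ (-(T x))
  orderCont : ∀ (S : Set A) (a : A), S.Nonempty → DirectedOn (· ≤ ·) S → IsLUB S a →
      IsLUB (T '' S) (T a)

def StrictlyPositive (T : A →ₗ[ℝ] A) : Prop := ∀ x : A, 0 < x → 0 < T x

/-- `E` is `T`-universally complete: every upward directed set in `E₊` whose
image under `T` is order bounded in `A = E^u` has a supremum in `E`. -/
def TUniversallyComplete (E : Set A) (T : A →ₗ[ℝ] A) : Prop :=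
  ∀ S : Set A, S ⊆ E → S.Nonempty → DirectedOn (· ≤ ·) S → (∀ x ∈ S, 0 ≤ x) →
    BddAbove (T '' S) → ∃ a ∈ E, IsLUB S a

/-- `L²(T) = {x ∈ E : x² ∈ E}` (squares taken in the `f`-algebra `A = E^u`). -/
def L2 (E : Set A) : Set A := {x | x ∈ E ∧ x * x ∈ E}

/-- A band projection: an order projection `0 ≤ P ≤ I`, `P² = P`. -/
def IsBandProjection (P : A →ₗ[ℝ] A) : Prop :=
  (∀ x, P (P x) = P x) ∧ ∀ x : A, 0 ≤ x → 0 ≤ P x ∧ P x ≤ x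

/-- `P` is the band projection onto the band generated by `u ≥ 0`:
`P x = sup_n (x ⊓ n u)` for `x ≥ 0`. -/
def IsBandProjOnto (P : A →ₗ[ℝ] A) (u : A) : Prop :=
  IsBandProjection P ∧ ∀ x : A, 0 ≤ x → IsLUB {y | ∃ n : ℕ, y = x ⊓ (n • u)} (P x)

/-- The variance `var(x) = T (x - Tx)²`. -/
def variance (T : A →ₗ[ℝ] A) (x : A) : A := T ((x - T x) * (x - T x))

/-- `f` and `g` are `T`-conditionally independent: there are conditional
expectation operators `Tf`, `Tg` commuting with `T`, with `f`, resp. `g`, in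
their ranges, satisfying `Tf ∘ Tg = T = Tg ∘ Tf`. -/
def AreTCondIndep (E : Set A) (T : A →ₗ[ℝ] A) (f g : A) : Prop :=
  ∃ Tf Tg : A →ₗ[ℝ] A, IsCondExpOn E Tf ∧ IsCondExpOn E Tg ∧
    Tf f = f ∧ Tg g = g ∧
    T.comp Tf = T ∧ Tf.comp T = T ∧ T.comp Tg = T ∧ Tg.comp T = T ∧
    Tf.comp Tg = T ∧ Tg.comp Tf = T

/-- A family of band projections is `T`-conditionally independent: `T`
factorizes over products of the components `P i e` and `(I - P i) e`. -/
def IsTCondIndepProjFamily {ι : Type*} (T : A →ₗ[ℝ] A) (P : ι → A →ₗ[ℝ] A) : Prop :=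
  ∀ (s : Finset ι) (c : ι → Bool),
    T (∏ i ∈ s, (if c i then P i 1 else 1 - P i 1)) =
      ∏ i ∈ s, T (if c i then P i 1 else 1 - P i 1)

/-- `e`-uniform convergence of a sequence. -/
def EUnifTendsTo (x : ℕ → A) (l : A) : Prop :=
  ∀ ε : ℝ, 0 < ε → ∃ N : ℕ, ∀ n ≥ N, |x n - l| ≤ ε • (1:A)

/-- Order convergence of a sequence. -/
def OrderConvergesTo (x : ℕ → A) (l : A) : Prop :=
  ∃ d : ℕ → A, Antitone d ∧ IsGLB (Set.range d) 0 ∧ ∀ n, |x n - l| ≤ d n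

/-- `h = e^{-g}` via the functional calculus on `E^e`: for every sequence of
polynomials converging uniformly to `t ↦ exp (-t)` on `[-1,1]`, the
evaluations at `g` converge `e`-uniformly to `h`. -/
def IsExpNeg (g h : A) : Prop :=
  ∀ (d : ℕ → ℕ) (a : ℕ → ℕ → ℝ),
    (∀ ε : ℝ, 0 < ε → ∃ N : ℕ, ∀ k ≥ N, ∀ t ∈ Set.Icc (-1:ℝ) 1,
        |(∑ i ∈ Finset.range (d k), a k i * t ^ i) - Real.exp (-t)| ≤ ε) →
    EUnifTendsTo (fun k => ∑ i ∈ Finset.range (d k), a k i • g ^ i) h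


section LatticeOrderedGroup

variable {G : Type*} [Lattice G] [AddCommGroup G] [IsOrderedAddMonoid G]

attribute [local instance] AddCommGroup.toDistribLattice

lemma posPart_sub_eq_self_of_inf_eq_zero {a b : G} (h : a ⊓ b = 0) : (a - b)⁺ = a := by
  rw [posPart_def, ← sub_self a, ← sub_inf, inf_comm, h, sub_zero]

lemma sup_inf_abs_sub_le {d : G} (hd : 0 ≤ d) (t : G) : (d ⊔ t) ⊓ |t - d| ≤ d ⊔ (t - d) := by
  have hmin : t ⊓ (d - t) ≤ d :=
    calc t ⊓ (d - t) = d + (t - d) ⊓ -t := by rw [add_inf, add_sub_cancel, ← sub_eq_add_neg]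
      _ ≤ d + t ⊓ -t := by gcongr; exact sub_le_self t hd
      _ = d - |t| := by rw [abs, sub_eq_add_neg, neg_sup, neg_neg, inf_comm]
      _ ≤ d := sub_le_self d (abs_nonneg t)
  rw [abs, neg_sub, inf_sup_right, inf_sup_left t]
  exact sup_le (inf_le_left.trans le_sup_left)
    (sup_le (inf_le_right.trans le_sup_right) (hmin.trans le_sup_left))

end LatticeOrderedGroup

namespace FRieszSpace

instance : IsOrderedAddMonoid A where
  add_le_add_left a b h c := by
    simpa only [add_comm _ c] using FRieszSpace.add_le_add_left' a b h c

lemma inf_mul_mul_eq_zero {a b c d : A} (h : a ⊓ b = 0) (hc : 0 ≤ c) (hd : 0 ≤ d) :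
    (a * c) ⊓ (b * d) = 0 := by
  have hac : b ⊓ (a * c) = 0 := by rw [inf_comm]; exact inf_mul_orth a b c hc h
  rw [inf_comm]
  exact inf_mul_orth b (a * c) d hd hac

lemma mul_eq_zero_of_inf_eq_zero {a b : A} (h : a ⊓ b = 0) : a * b = 0 := by
  have ha : 0 ≤ a := h ▸ inf_le_left
  have hb : 0 ≤ b := h ▸ inf_le_right
  simpa [mul_comm b a] using inf_mul_mul_eq_zero h hb ha

lemma posPart_mul_negPart (a : A) : a⁺ * a⁻ = 0 :=
  mul_eq_zero_of_inf_eq_zero (posPart_inf_negPart_eq_zero a)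

lemma mul_self_nonneg (a : A) : 0 ≤ a * a := by
  have h : a * a = a⁺ * a⁺ + a⁻ * a⁻ - 2 * (a⁺ * a⁻) := by
    conv_lhs => rw [← posPart_sub_negPart a]
    ring
  rw [h, posPart_mul_negPart, mul_zero, sub_zero]
  exact add_nonneg (mul_nonneg' _ _ (posPart_nonneg a) (posPart_nonneg a))
    (mul_nonneg' _ _ (negPart_nonneg a) (negPart_nonneg a))

instance : IsOrderedRing A where
  zero_le_one := by simpa using mul_self_nonneg (1 : A)
  mul_le_mul_of_nonneg_left a ha b c h := by
    simpa [mul_sub] using mul_nonneg' a (c - b) ha (sub_nonneg.mpr h)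
  mul_le_mul_of_nonneg_right a ha b c h := by
    simpa [sub_mul] using mul_nonneg' (c - b) a (sub_nonneg.mpr h) ha

instance : IsOrderedModule ℝ A :=
  .of_smul_nonneg fun r hr a ha => smul_nonneg' r a hr ha

lemma abs_mul_abs_self (a : A) : |a| * |a| = a * a := by
  calc |a| * |a| = (a⁺ - a⁻) * (a⁺ - a⁻) + 4 * (a⁺ * a⁻) := by rw [← posPart_add_negPart]; ring
    _ = a * a := by rw [posPart_mul_negPart, posPart_sub_negPart]; ring

lemma mul_posPart {c : A} (hc : 0 ≤ c) (a : A) : c * a⁺ = (c * a)⁺ := by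
  have h : (c * a⁺) ⊓ (c * a⁻) = 0 := by
    simpa [mul_comm c] using inf_mul_mul_eq_zero (posPart_inf_negPart_eq_zero a) hc hc
  rw [← posPart_sub_eq_self_of_inf_eq_zero h, ← mul_sub, posPart_sub_negPart]

lemma abs_mul_of_nonneg {c : A} (hc : 0 ≤ c) (a : A) : |c * a| = c * |a| := by
  rw [← posPart_add_negPart, ← posPart_add_negPart a, mul_add, mul_posPart hc, ← posPart_neg,
    ← posPart_neg a, mul_posPart hc, mul_neg]

lemma inf_mul_inf_self {a b : A} (ha : 0 ≤ a) (hb : 0 ≤ b) :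
    (a ⊓ b) * (a ⊓ b) = a * a ⊓ b * b := by
  have hac : a - a ⊓ b = (a - b)⁺ := by rw [sub_inf, sub_self, posPart_def, sup_comm]
  have hbc : b - a ⊓ b = (a - b)⁻ := by
    rw [inf_comm, sub_inf, sub_self, negPart_def, neg_sub, sup_comm]
  set c := a ⊓ b
  have hc : 0 ≤ c := le_inf ha hb
  have h : (a * a - c * c) ⊓ (b * b - c * c) = 0 := by
    rw [show a * a - c * c = (a - c) * (a + c) by ring,
      show b * b - c * c = (b - c) * (b + c) by ring, hac, hbc]
    exact inf_mul_mul_eq_zero (posPart_inf_negPart_eq_zero _) (add_nonneg ha hc) (add_nonneg hb hc)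
  rw [← inf_sub] at h
  exact (sub_eq_zero.mp h).symm

lemma sub_mul_self_inf_add_mul_self {c : A} (hc : 0 ≤ c) (y : A) :
    (y - c) * (y - c) ⊓ (y + c) * (y + c) = (|y| - c) * (|y| - c) := by
  have h2c : (0 : A) ≤ 2 * c := mul_nonneg zero_le_two hc
  calc (y - c) * (y - c) ⊓ (y + c) * (y + c)
      = (y * y + c * c) + (-(2 * c * y) ⊓ (2 * c * y)) := by rw [add_inf]; congr 1 <;> ring
    _ = (y * y + c * c) - 2 * c * |y| := by
        rw [← abs_mul_of_nonneg h2c, abs, sub_eq_add_neg, neg_sup, neg_neg, inf_comm]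
    _ = (|y| - c) * (|y| - c) := by rw [← abs_mul_abs_self y]; ring

lemma le_one_sup_sub_mul_self {W x : A} (hx : 0 ≤ x) (h : ∀ n : ℕ, W ≤ (x - n) * (x - n))
    (J : ℕ) : W ≤ (1 ⊔ (x - J)) * (1 ⊔ (x - J)) := by
  induction J with
  | zero =>
    have hx1 : x ≤ 1 ⊔ x := le_sup_right
    have h0 : W ≤ x * x := by simpa using h 0
    simpa using h0.trans (mul_le_mul hx1 hx1 hx (hx.trans hx1))
  | succ J ih =>
    have hs : 0 ≤ 1 ⊔ (x - J) := le_sup_of_le_left zero_le_one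
    have hstep := sup_inf_abs_sub_le zero_le_one (x - J)
    have hsq : W ≤ |x - J - 1| * |x - J - 1| := by
      rw [abs_mul_abs_self, sub_sub]; exact_mod_cast h (J + 1)
    calc W ≤ (1 ⊔ (x - J)) * (1 ⊔ (x - J)) ⊓ |x - J - 1| * |x - J - 1| := le_inf ih hsq
      _ = ((1 ⊔ (x - J)) ⊓ |x - J - 1|) * ((1 ⊔ (x - J)) ⊓ |x - J - 1|) :=
        (inf_mul_inf_self hs (abs_nonneg _)).symm
      _ ≤ (1 ⊔ (x - J - 1)) * (1 ⊔ (x - J - 1)) :=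
        mul_le_mul hstep hstep (le_inf hs (abs_nonneg _)) (le_sup_of_le_left zero_le_one)
      _ = (1 ⊔ (x - ↑(J + 1))) * (1 ⊔ (x - ↑(J + 1))) := by rw [Nat.cast_succ, sub_sub]

lemma negPart_mul_one_sup_natCast_mul (z : A) (m : ℕ) : z⁻ * (1 ⊔ m * z) = z⁻ := by
  have hp : z⁻ * (m * z - 1)⁺ = 0 := by
    have hle : (m * z - 1)⁺ ≤ m * z⁺ := by
      rw [posPart_def]
      exact sup_le ((sub_le_self _ zero_le_one).trans
        (mul_le_mul_of_nonneg_left (le_posPart z) m.cast_nonneg))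
        (mul_nonneg m.cast_nonneg (posPart_nonneg z))
    refine le_antisymm ?_ (mul_nonneg (negPart_nonneg z) (posPart_nonneg _))
    calc z⁻ * (m * z - 1)⁺ ≤ z⁻ * (m * z⁺) := mul_le_mul_of_nonneg_left hle (negPart_nonneg z)
      _ = m * (z⁺ * z⁻) := by ring
      _ = 0 := by rw [posPart_mul_negPart, mul_zero]
  rw [sup_comm, sup_eq_add_posPart_sub, mul_add, hp, mul_one, add_zero]

section AdditiveOperator

variable {F : Type*} [FunLike F A A] [AddMonoidHomClass F A A]

lemma map_intCast_mul (S : F) (n : ℤ) (a : A) : S (n * a) = n * S a := by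
  rw [← zsmul_eq_mul, map_zsmul, zsmul_eq_mul]

lemma map_intCast_mul_sub_mul_self (S : F) (hS1 : S 1 = 1) (f : A) (a b : ℤ) :
    S ((a * f - b) * (a * f - b)) = a * a * S (f * f) - 2 * a * b * S f + b * b := by
  have h : ((a : A) * f - b) * (a * f - b) =
      ((a * a : ℤ) : A) * (f * f) - ((2 * a * b : ℤ) : A) * f + ((b * b : ℤ) : A) * 1 := by
    push_cast; ring
  rw [h, map_add, map_sub, map_intCast_mul, map_intCast_mul, map_intCast_mul, hS1]
  push_cast; ring

lemma natCast_mul_self_mul_sub_le (S : F) (hS : ∀ a, 0 ≤ a → 0 ≤ S a) (hS1 : S 1 = 1) (f : A)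
    (m n : ℕ) :
    (m * m : A) * (S f * S f - S (f * f)) ≤ (m * |S f| - n) * (m * |S f| - n) := by
  have hquad : ∀ b : ℤ,
      (m * m : A) * (S f * S f - S (f * f)) ≤ (m * S f - b) * (m * S f - b) := by
    intro b
    have h := hS _ (mul_self_nonneg ((m : ℤ) * f - b))
    rw [map_intCast_mul_sub_mul_self S hS1] at h
    push_cast at h
    rw [← sub_nonneg]
    convert h using 1
    ring
  have h := le_inf (hquad n) (hquad (-n))
  push_cast at h
  rwa [sub_neg_eq_add, sub_mul_self_inf_add_mul_self (Nat.cast_nonneg n),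
    abs_mul_of_nonneg (Nat.cast_nonneg m)] at h

end AdditiveOperator

end FRieszSpace

namespace IsRieszSubspace

variable {E : Set A} (hE : IsRieszSubspace E)
include hE

lemma sub_mem {x y : A} (hx : x ∈ E) (hy : y ∈ E) : x - y ∈ E := by
  simpa [sub_eq_add_neg] using hE.add_mem _ _ hx (hE.smul_mem (-1) y hy)

lemma natCast_mem (n : ℕ) : (n : A) ∈ E := by
  have h := hE.smul_mem n 1 hE.one_mem
  rwa [Nat.cast_smul_eq_nsmul, nsmul_one] at h

lemma negPart_mem {x : A} (hx : x ∈ E) : x⁻ ∈ E := by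
  rw [negPart_def, sup_eq_half_smul_add_add_abs_sub' ℝ]
  have hnx : -x ∈ E := by simpa using hE.smul_mem (-1) x hx
  exact hE.smul_mem _ _ (hE.add_mem _ _ (by simpa using hnx)
    (hE.abs_mem _ (hE.sub_mem hE.zero_mem hnx)))

end IsRieszSubspace

namespace TUniversallyComplete

variable {E : Set A} {T : A →ₗ[ℝ] A}
  (hTU : TUniversallyComplete E T) (hT : ∀ a, 0 ≤ a → 0 ≤ T a) (hE : IsRieszSubspace E)
include hTU hT hE

lemma eq_zero_of_nsmul_le_of_mem {x y : A} (hxE : x ∈ E) (hx : 0 ≤ x)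
    (h : ∀ n : ℕ, n • x ≤ y) : x = 0 := by
  have hTmono : Monotone T := (monotone_iff_map_nonneg T).mpr hT
  obtain ⟨a, -, ha⟩ := hTU (Set.range fun n : ℕ => n • x)
    (by rintro - ⟨n, rfl⟩; simpa [Nat.cast_smul_eq_nsmul] using hE.smul_mem n x hxE)
    (Set.range_nonempty _)
    (directedOn_range.mpr (Monotone.directed_le fun _ _ hnm => nsmul_le_nsmul_left hx hnm))
    (by rintro - ⟨n, rfl⟩; exact nsmul_nonneg hx n)
    ⟨T y, by rintro - ⟨-, ⟨n, rfl⟩, rfl⟩; exact hTmono (h n)⟩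
  have hub : a - x ∈ upperBounds (Set.range fun n : ℕ => n • x) := by
    rintro - ⟨n, rfl⟩
    exact le_sub_iff_add_le.mpr (succ_nsmul x n ▸ ha.1 ⟨n + 1, rfl⟩)
  exact le_antisymm (by simpa using ha.2 hub) hx

lemma eq_zero_of_nsmul_le {z y : A} (hyE : y ∈ E) (hz : 0 ≤ z)
    (h : ∀ n : ℕ, n • z ≤ y) : z = 0 := by
  have hTmono : Monotone T := (monotone_iff_map_nonneg T).mpr hT
  have hy : 0 ≤ y := hz.trans (by simpa using h 1)
  have hz_le : ∀ n : ℕ, z ≤ ((n : ℝ) + 1)⁻¹ • y := fun n => by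
    rw [le_inv_smul_iff_of_pos (by positivity)]
    exact_mod_cast (Nat.cast_smul_eq_nsmul ℝ (n + 1) z).trans_le (h (n + 1))
  have hshrink : ∀ n : ℕ, ((n : ℝ) + 1)⁻¹ • y ≤ y := fun n =>
    smul_le_of_le_one_left hy (inv_le_one_of_one_le₀ (by simp))
  have hmono : Monotone fun n : ℕ => y - ((n : ℝ) + 1)⁻¹ • y := fun n m hnm =>
    sub_le_sub_left (smul_le_smul_of_nonneg_right
      (inv_anti₀ (by positivity) (by simpa using hnm)) hy) y
  obtain ⟨s, hsE, hs⟩ := hTU (Set.range fun n : ℕ => y - ((n : ℝ) + 1)⁻¹ • y)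
    (by rintro - ⟨n, rfl⟩; exact hE.sub_mem hyE (hE.smul_mem _ _ hyE))
    (Set.range_nonempty _) (directedOn_range.mpr hmono.directed_le)
    (by rintro - ⟨n, rfl⟩; exact sub_nonneg.mpr (hshrink n))
    ⟨T y, by rintro - ⟨-, ⟨n, rfl⟩, rfl⟩; exact hTmono (sub_le_self _ (hz.trans (hz_le n)))⟩
  have hs_le : s ≤ y - z := hs.2 (by rintro - ⟨n, rfl⟩; exact sub_le_sub_left (hz_le n) y)
  have hys : y - s = 0 := by
    refine eq_zero_of_nsmul_le_of_mem hTU hT hE (y := y) (hE.sub_mem hyE hsE)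
      (sub_nonneg.mpr (hs_le.trans (sub_le_self y hz))) fun n => ?_
    rcases n with _ | k
    · simpa using hy
    have hk : y - s ≤ ((k : ℝ) + 1)⁻¹ • y := sub_le_comm.mp (hs.1 ⟨k, rfl⟩)
    rw [← Nat.cast_smul_eq_nsmul ℝ]
    exact_mod_cast (le_inv_smul_iff_of_pos (by positivity)).mp hk
  rw [← sub_eq_zero.mp hys] at hs_le
  exact le_antisymm (by simpa using hs_le) hz

lemma negPart_sub_natCast_mul_posPart_eq_zero {x D : A} (hxE : x ∈ E)
    (h : ∀ m J : ℕ, (m * m : A) * D ≤ (1 ⊔ (m * x - J)) * (1 ⊔ (m * x - J))) (N : ℕ) :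
    (x - N)⁻ * D⁺ = 0 := by
  set c := (x - N)⁻
  have hc : 0 ≤ c := negPart_nonneg _
  have hcD : 0 ≤ c * D⁺ := mul_nonneg hc (posPart_nonneg D)
  have hbound : ∀ m : ℕ, (m * m : A) * (c * D⁺) ≤ c := by
    intro m
    have hm := h m (m * N)
    rw [show (m : A) * x - ↑(m * N) = m * (x - N) by push_cast; ring] at hm
    have hmcD : (m * m * c) * D ≤ c :=
      calc (m * m * c) * D = c * ((m * m : A) * D) := by ring
        _ ≤ c * ((1 ⊔ m * (x - N)) * (1 ⊔ m * (x - N))) := mul_le_mul_of_nonneg_left hm hc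
        _ = c := by rw [← mul_assoc, FRieszSpace.negPart_mul_one_sup_natCast_mul,
            FRieszSpace.negPart_mul_one_sup_natCast_mul]
    rw [← mul_assoc, FRieszSpace.mul_posPart (mul_nonneg (FRieszSpace.mul_self_nonneg _) hc),
      posPart_def]
    exact sup_le hmcD hc
  refine eq_zero_of_nsmul_le hTU hT hE
    (hE.negPart_mem (hE.sub_mem hxE (hE.natCast_mem N))) hcD fun n => ?_
  rw [nsmul_eq_mul]
  exact (mul_le_mul_of_nonneg_right
    (by simpa using Nat.mono_cast (α := A) (Nat.le_mul_self n)) hcD).trans (hbound n)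

lemma eq_zero_of_forall_negPart_sub_natCast_mul_eq_zero {x w : A} (hxE : x ∈ E) (hx : 0 ≤ x)
    (hw : 0 ≤ w) (h : ∀ N : ℕ, (x - N)⁻ * w = 0) : w = 0 := by
  have hu0 : 0 ≤ w ⊓ 1 := le_inf hw zero_le_one
  have hu : w ⊓ 1 = 0 := by
    refine eq_zero_of_nsmul_le hTU hT hE hxE hu0 fun N => ?_
    rcases N.eq_zero_or_pos with rfl | hN
    · simpa using hx
    set c := (x - N)⁻
    have hc : 0 ≤ c := negPart_nonneg _
    have huc : (w ⊓ 1) * c = 0 := le_antisymm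
      ((mul_le_mul_of_nonneg_right inf_le_left hc).trans_eq (by rw [mul_comm, h]))
      (mul_nonneg hu0 hc)
    have hNc : (N : A) ≤ N * c + x := by
      have h1 : (N : A) - x ≤ c := by simpa using neg_le_negPart (x - N)
      have h2 : c ≤ N * c := le_mul_of_one_le_left hc (by simpa using Nat.mono_cast (α := A) hN)
      calc (N : A) = (N - x) + x := by ring
        _ ≤ N * c + x := by gcongr; exact h1.trans h2
    calc N • (w ⊓ 1) = (w ⊓ 1) * N := by rw [nsmul_eq_mul, mul_comm]
      _ ≤ (w ⊓ 1) * (N * c + x) := mul_le_mul_of_nonneg_left hNc hu0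
      _ = N * ((w ⊓ 1) * c) + (w ⊓ 1) * x := by ring
      _ ≤ 1 * x := by
        rw [huc, mul_zero, zero_add]; exact mul_le_mul_of_nonneg_right inf_le_right hx
      _ = x := one_mul x
  apply FRieszSpace.one_weak_unit
  rwa [← abs, abs_of_nonneg hw]

end TUniversallyComplete

theorem sq_condexp_le_general {A : Type*} [FRieszSpace A] (E : Set A) (hE : IsRieszSubspace E)
    (T : A →ₗ[ℝ] A) (hT : IsCondExpOn E T)
    (hTU : TUniversallyComplete E T)
    (S : A →ₗ[ℝ] A) (hS : IsCondExpOn E S)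
    (f : A) (hf : f ∈ L2 E) : S f * S f ≤ S (f * f) := by
  have hxE : |S f| ∈ E := hE.abs_mem _ (hS.mapsTo f hf.1)
  have hgap : (S f * S f - S (f * f))⁺ = 0 :=
    hTU.eq_zero_of_forall_negPart_sub_natCast_mul_eq_zero hT.positive hE hxE (abs_nonneg _)
      (posPart_nonneg _) fun N => hTU.negPart_sub_natCast_mul_posPart_eq_zero hT.positive hE hxE
        (fun m J => FRieszSpace.le_one_sup_sub_mul_self (mul_nonneg m.cast_nonneg (abs_nonneg _))
          (FRieszSpace.natCast_mul_self_mul_sub_le S hS.positive hS.unit f m) J) N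
  exact sub_nonpos.mp (posPart_eq_zero.mp hgap)

/-- Conditional Cauchy–Schwarz type inequality: `(Sf)² ≤ S(f²)` for `f ∈ L²(T)`. -/
theorem sq_condexp_le {A : Type*} [FRieszSpace A] (E : Set A) (hE : IsRieszSubspace E)
    (T : A →ₗ[ℝ] A) (hT : IsCondExpOn E T) (hTsp : StrictlyPositive T)
    (hTU : TUniversallyComplete E T)
    (S : A →ₗ[ℝ] A) (hS : IsCondExpOn E S)
    (hTS : T.comp S = T) (hST : S.comp T = T)
    (f : A) (hf : f ∈ L2 E) : S f * S f ≤ S (f * f) :=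
  sq_condexp_le_general E hE T hT hTU S hS f hf
end

section
/- If f ≥ 0 in a Dedekind complete Riesz space with weak order unit e and ε > 0, then f² ≥ ε² P_{(f-εe)^+} e ≥ 0, where the square is in the f-algebra on the universal completion and P_{(f-εe)^+} is the band projection onto the band generated by (f-εe)^+. -/
open Finset

variable {A : Type*} [FRieszSpace A]

/-!
On the band generated by `u = (f - ε)⁺` one has `f ≥ ε`, hence `f² ≥ ε²`. Since `A` need not be
Archimedean and real scalars need not commute with the multiplication, the argument goes through
a rational `q ≤ ε`, for which `(q • 1) * x = q • x`. Writing `f = q + a - b` with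
`a = (f - q)⁺`, `b = (f - q)⁻` (so `a * b = 0` as `0 ≤ b ≤ q`) gives
`f² = q² - b (2q - b) + 2q a + a²`, where `b (2q - b)` lies in the band of `b`, disjoint from that
of `a`; hence `f² ≥ (q² ⊓ n u) + 2q u`. The remaining gap `ε² - q²` on `ε² ⊓ n u` is absorbed by
`2q u` once `q` is close enough to `ε`, depending on `n`.
-/

section LatticeOrderedModule

variable {𝕜 β : Type*} [Field 𝕜] [LinearOrder 𝕜] [IsStrictOrderedRing 𝕜]
  [AddCommGroup β] [Lattice β] [IsOrderedAddMonoid β] [Module 𝕜 β] [IsOrderedModule 𝕜 β]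

lemma inf_smul_eq_zero_of_inf_eq_zero {a b : β} (ha : 0 ≤ a) (hb : 0 ≤ b) (hab : a ⊓ b = 0)
    {k : 𝕜} (hk : 0 ≤ k) : a ⊓ k • b = 0 := by
  set M := max k 1
  have hM : 1 ≤ M := le_max_right k 1
  refine le_antisymm ?_ (le_inf ha (smul_nonneg hk hb))
  calc a ⊓ k • b ≤ M • a ⊓ M • b :=
        inf_le_inf (le_smul_of_one_le_left ha hM)
          (smul_le_smul_of_nonneg_right (le_max_left k 1) hb)
    _ = M • (a ⊓ b) := ((OrderIso.smulRight (zero_lt_one.trans_le hM)).map_inf a b).symm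
    _ = 0 := by rw [hab, smul_zero]

-- Pointwise: `min d y - min c y ≤ k y`, because either `y ≤ c` or `k y ≥ k c ≥ d - c`.
lemma inf_le_inf_add_smul {c d y : β} (hy : 0 ≤ y) {k : 𝕜} (hk : 0 ≤ k) (hdc : d ≤ c + k • c) :
    d ⊓ y ≤ c ⊓ y + k • y := by
  have hky : 0 ≤ k • y := smul_nonneg hk hy
  have hpos : d ⊓ y - (c + k • y) ≤ (y - c)⁺ :=
    (sub_le_sub inf_le_right (le_add_of_nonneg_right hky)).trans (le_posPart _)
  have hneg : d ⊓ y - (c + k • y) ≤ k • (y - c)⁻ :=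
    calc d ⊓ y - (c + k • y) ≤ c + k • c - (c + k • y) :=
          sub_le_sub_right (inf_le_left.trans hdc) _
      _ = k • -(y - c) := by rw [neg_sub, smul_sub]; abel
      _ ≤ k • (y - c)⁻ := smul_le_smul_of_nonneg_left (neg_le_negPart _) hk
  have hle : d ⊓ y ≤ c + k • y := by
    rw [← sub_nonpos, ← inf_smul_eq_zero_of_inf_eq_zero (posPart_nonneg (y - c))
      (negPart_nonneg (y - c)) (posPart_inf_negPart_eq_zero (y - c)) hk]
    exact le_inf hpos hneg
  rw [inf_add]
  exact le_inf hle (inf_le_right.trans (le_add_of_nonneg_right hky))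

end LatticeOrderedModule

lemma exists_rat_mem_Ioc_sq_le {ε N : ℝ} (hε : 0 < ε) (hN : 0 < N) :
    ∃ q : ℚ, (q : ℝ) ∈ Set.Ioc 0 ε ∧ ε ^ 2 ≤ q ^ 2 + 2 * q / N * q ^ 2 := by
  obtain ⟨q, hq_lo, hq_hi⟩ := exists_rat_btwn (max_lt (half_lt_self hε)
    (sub_lt_self ε (by positivity : 0 < ε ^ 2 / (8 * N))))
  rw [max_lt_iff] at hq_lo
  refine ⟨q, ⟨by linarith, hq_hi.le⟩, ?_⟩
  have h_gap : ε ^ 2 - q ^ 2 ≤ ε ^ 3 / (4 * N) := by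
    have : ε - q ≤ ε ^ 2 / (8 * N) := by linarith
    calc ε ^ 2 - q ^ 2 = (ε - q) * (ε + q) := by ring
      _ ≤ ε ^ 2 / (8 * N) * (2 * ε) := by gcongr <;> nlinarith
      _ = ε ^ 3 / (4 * N) := by field_simp; ring
  have h_cube : ε ^ 3 / (4 * N) ≤ 2 * q / N * q ^ 2 := by
    rw [div_mul_eq_mul_div, div_le_div_iff₀ (by positivity) hN]
    have : ε ^ 3 ≤ 8 * (q : ℝ) ^ 3 := by
      nlinarith [pow_le_pow_left₀ (half_pos hε).le hq_lo.1.le 3]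
    nlinarith
  linarith

namespace FRieszSpace

instance inst_s5 : IsOrderedAddMonoid A where
  add_le_add_left a b h c := by simpa only [add_comm c] using add_le_add_left' a b h c

instance inst_s5_2 : IsOrderedModule ℝ A := .of_smul_nonneg fun r hr x hx => smul_nonneg' r x hr hx

-- `1⁻` is disjoint from `1⁺`, hence from `1⁺ * 1⁻ = 1⁻ + 1⁻ * 1⁻ ≥ 1⁻`.
instance : ZeroLEOneClass A where
  zero_le_one := by
    set p := (1 : A)⁺
    set n := (1 : A)⁻
    have hn0 : 0 ≤ n := negPart_nonneg 1
    have hpn : p - n = 1 := posPart_sub_negPart 1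
    have hle : n ≤ p * n := by
      rw [eq_add_of_sub_eq hpn, add_mul, one_mul]
      exact le_add_of_nonneg_right (mul_nonneg' n n hn0 hn0)
    have hn : n = 0 := by
      rw [← inf_eq_right.mpr hle]
      exact inf_mul_orth p n n hn0 (posPart_inf_negPart_eq_zero 1)
    rw [← hpn, hn, sub_zero]
    exact posPart_nonneg 1

instance inst_s5_3 : IsOrderedRing A := .of_mul_nonneg mul_nonneg'

lemma ratCast_smul_one_mul (q : ℚ) (x : A) : ((q : ℝ) • (1 : A)) * x = (q : ℝ) • x := by
  simpa using map_ratCast_smul (AddMonoidHom.mulRight x) ℝ ℝ q 1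

lemma mul_eq_zero_of_inf_eq_zero_s5 {a b : A} (ha : 0 ≤ a) (hb : 0 ≤ b) (hab : a ⊓ b = 0)
    {q : ℚ} (hq : 0 ≤ q) (hbq : b ≤ (q : ℝ) • 1) : a * b = 0 := by
  have hdisj : (a * b) ⊓ a = 0 := by
    rw [mul_comm]; exact inf_mul_orth b a a ha (by rwa [inf_comm])
  have hle : a * b ≤ (q : ℝ) • a := by
    rw [← ratCast_smul_one_mul, mul_comm]; exact mul_le_mul_of_nonneg_right hbq ha
  rw [← inf_eq_left.mpr hle]
  exact inf_smul_eq_zero_of_inf_eq_zero (mul_nonneg ha hb) ha hdisj (by exact_mod_cast hq)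

lemma add_smul_posPart_le_mul_self {f s : A} (hf : 0 ≤ f) {q : ℚ} (hq : 0 ≤ q)
    (hsq : s ≤ ((q : ℝ) ^ 2) • 1) (hs_disj : s ⊓ (f - (q : ℝ) • 1)⁻ = 0) :
    s + (2 * (q : ℝ)) • (f - (q : ℝ) • 1)⁺ ≤ f * f := by
  set F : A := (q : ℝ) • 1
  set a := (f - F)⁺
  set b := (f - F)⁻
  have hF : 0 ≤ F := smul_nonneg (by exact_mod_cast hq) zero_le_one
  have hf_eq : f = F + a - b := by rw [add_sub_assoc, posPart_sub_negPart]; abel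
  have hb : 0 ≤ b := negPart_nonneg _
  have hbF : b ≤ F := by
    rw [show b = (F - f)⁺ by rw [← neg_sub, posPart_neg]]
    exact sup_le (sub_le_self F hf) hF
  have hab : a * b = 0 :=
    mul_eq_zero_of_inf_eq_zero_s5 (posPart_nonneg _) hb (posPart_inf_negPart_eq_zero _) hq hbF
  have hm_disj : s ⊓ b * (F + F - b) = 0 := by
    rw [inf_comm]
    exact inf_mul_orth b s _ (sub_nonneg.mpr (hbF.trans (le_add_of_nonneg_left hF)))
      (by rwa [inf_comm])
  have hFF : F * F = ((q : ℝ) ^ 2) • 1 := by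
    rw [ratCast_smul_one_mul, smul_smul, sq]
  have hFa : F * a = (q : ℝ) • a := ratCast_smul_one_mul q a
  have hm : b * (F + F - b) ≤ F * F := by
    rw [← sub_nonneg, show F * F - b * (F + F - b) = (F - b) * (F - b) by ring]
    exact mul_nonneg (sub_nonneg.mpr hbF) (sub_nonneg.mpr hbF)
  have hsm : s + b * (F + F - b) ≤ F * F := by
    rw [← inf_add_sup, hm_disj, zero_add]
    exact sup_le (hsq.trans_eq hFF.symm) hm
  have hfa : f * f = F * F - b * (F + F - b) + (F * a + F * a) + a * a := by
    rw [hf_eq]; linear_combination (-2) * hab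
  calc s + (2 * (q : ℝ)) • a = s + (F * a + F * a) := by rw [hFa, two_mul, add_smul]
    _ ≤ F * F - b * (F + F - b) + (F * a + F * a) :=
        add_le_add_left (le_sub_iff_add_le.mpr hsm) _
    _ ≤ f * f := hfa ▸ le_add_of_nonneg_right (mul_nonneg (posPart_nonneg _) (posPart_nonneg _))

lemma smul_one_inf_smul_posPart_le_mul_self {f : A} (hf : 0 ≤ f) {ε N : ℝ} (hε : 0 < ε)
    (hN : 0 < N) : (ε ^ 2 • 1) ⊓ N • (f - ε • 1)⁺ ≤ f * f := by
  obtain ⟨q, ⟨hq, hqε⟩, hsq⟩ := exists_rat_mem_Ioc_sq_le hε hN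
  set u := (f - ε • 1)⁺
  set a := (f - (q : ℝ) • 1)⁺
  have hua : u ≤ a :=
    posPart_mono (sub_le_sub_left (smul_le_smul_of_nonneg_right hqε zero_le_one) f)
  have hNu : 0 ≤ N • u := smul_nonneg hN.le (posPart_nonneg _)
  have hdc : ε ^ 2 • (1 : A) ≤ (q : ℝ) ^ 2 • 1 + (2 * q / N) • ((q : ℝ) ^ 2 • 1) := by
    rw [smul_smul, ← add_smul]
    exact smul_le_smul_of_nonneg_right hsq zero_le_one
  have hNa_disj : N • a ⊓ (f - (q : ℝ) • 1)⁻ = 0 := by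
    rw [inf_comm]
    exact inf_smul_eq_zero_of_inf_eq_zero (negPart_nonneg _) (posPart_nonneg _)
      (by rw [inf_comm]; exact posPart_inf_negPart_eq_zero _) hN.le
  have hs_disj : ((q : ℝ) ^ 2 • 1) ⊓ N • u ⊓ (f - (q : ℝ) • 1)⁻ = 0 := by
    refine le_antisymm ?_ (le_inf (le_inf (smul_nonneg (sq_nonneg _) zero_le_one) hNu)
      (negPart_nonneg _))
    rw [← hNa_disj]
    exact inf_le_inf_right _ (inf_le_right.trans (smul_le_smul_of_nonneg_left hua hN.le))
  calc (ε ^ 2 • 1) ⊓ N • u ≤ ((q : ℝ) ^ 2 • 1) ⊓ N • u + (2 * q / N) • (N • u) :=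
        inf_le_inf_add_smul hNu (by positivity) hdc
    _ = ((q : ℝ) ^ 2 • 1) ⊓ N • u + (2 * (q : ℝ)) • u := by
        rw [smul_smul, div_mul_cancel₀ _ hN.ne']
    _ ≤ ((q : ℝ) ^ 2 • 1) ⊓ N • u + (2 * (q : ℝ)) • a := by gcongr
    _ ≤ f * f := add_smul_posPart_le_mul_self hf (by exact_mod_cast hq.le) inf_le_left hs_disj

end FRieszSpace

/-- For `f ≥ 0` and `ε > 0`: `f² ≥ ε² P_{(f-εe)⁺} e ≥ 0`. -/
theorem sq_ge_band_proj {A : Type*} [FRieszSpace A]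
    (f : A) (hf0 : 0 ≤ f) (ε : ℝ) (hε : 0 < ε)
    (P : A →ₗ[ℝ] A) (hP : IsBandProjOnto P ((f - ε • 1) ⊔ 0)) :
    ε ^ 2 • P 1 ≤ f * f ∧ 0 ≤ ε ^ 2 • P (1:A) := by
  have hP1 : 0 ≤ P 1 := (hP.1.2 (1 : A) zero_le_one).1
  refine ⟨?_, smul_nonneg (sq_nonneg ε) hP1⟩
  rw [← map_smul]
  refine (hP.2 _ (smul_nonneg (sq_nonneg ε) zero_le_one)).2 ?_
  rintro _ ⟨n, rfl⟩
  calc (ε ^ 2 • 1) ⊓ n • (f - ε • 1)⁺ ≤ (ε ^ 2 • 1) ⊓ ((n : ℝ) + 1) • (f - ε • 1)⁺ := by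
        rw [← Nat.cast_smul_eq_nsmul ℝ]
        exact inf_le_inf_left _ (smul_le_smul_of_nonneg_right (by linarith) (posPart_nonneg _))
    _ ≤ f * f := FRieszSpace.smul_one_inf_smul_posPart_le_mul_self hf0 hε (by positivity)
end

section
/- For g in the principal ideal E^e of a Dedekind complete Riesz space E generated by the weak order unit e, the sequence (e - g/n)^n converges e-uniformly as n → ∞ to the element e^{-g} defined via the functional calculus applied to t ↦ exp(-t) on [-1,1]. -/
/-!
Expanding `(1 - g/n)^n` binomially writes it as `p_n(g)` for the real polynomial
`p_n(t) = (1 - t/n)^n`, so by the defining property of `e^{-g}` it suffices that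
`(1 - t/n)^n → e^{-t}` uniformly on `[-1, 1]`. This follows from
`e^{-t} (1 - t²/n) ≤ (1 - t/n)^n ≤ e^{-t}` for `|t| ≤ n`: the lower bound comes from Bernoulli's
inequality for `((1 - t/n)(1 + t/n))^n = (1 - t²/n²)^n` together with `(1 + t/n)^n ≤ e^t`.
-/

open Finset

variable {A : Type*} [FRieszSpace A]

open Filter

namespace Real

theorem exp_neg_mul_one_sub_sq_div_le_one_sub_div_pow {n : ℕ} {t : ℝ} (ht : |t| ≤ n) :
    exp (-t) * (1 - t ^ 2 / n) ≤ (1 - t / n) ^ n := by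
  obtain ⟨htl, htr⟩ := abs_le.1 ht
  rcases eq_or_ne n 0 with rfl | hn
  · obtain rfl : t = 0 := le_antisymm (by simpa using htr) (by simpa using htl)
    simp
  have hn' : (0 : ℝ) < n := by positivity
  have hbase : 0 ≤ 1 - t / n := sub_nonneg.2 (div_le_one_of_le₀ htr hn'.le)
  have hbernoulli : 1 - t ^ 2 / n ≤ (1 - t / n) ^ n * (1 + t / n) ^ n := by
    have hsq : t ^ 2 ≤ (n : ℝ) ^ 2 := sq_le_sq' htl htr
    have hprod : (1 - t / n) * (1 + t / n) = 1 + -(t ^ 2 / (n : ℝ) ^ 2) := by field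
    have hlin : 1 - t ^ 2 / n = 1 + n * -(t ^ 2 / (n : ℝ) ^ 2) := by field
    rw [← mul_pow, hprod, hlin]
    refine one_add_mul_le_pow ?_ n
    rw [neg_le_neg_iff]
    exact ((div_le_one₀ (by positivity)).2 hsq).trans one_le_two
  have hplus : (1 + t / n) ^ n ≤ exp t := by
    simpa [sub_neg_eq_add, neg_div] using one_sub_div_pow_le_exp_neg (n := n) (t := -t) (by linarith)
  calc exp (-t) * (1 - t ^ 2 / n)
      ≤ exp (-t) * ((1 - t / n) ^ n * exp t) := by
        gcongr
        exact hbernoulli.trans (by gcongr)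
    _ = (1 - t / n) ^ n := by rw [mul_left_comm, ← exp_add, neg_add_cancel, exp_zero, mul_one]

theorem abs_one_sub_div_pow_sub_exp_neg_le {n : ℕ} {t : ℝ} (ht : |t| ≤ n) :
    |(1 - t / n) ^ n - exp (-t)| ≤ t ^ 2 / n * exp (-t) := by
  rw [abs_sub_comm, abs_of_nonneg (sub_nonneg.2 <| one_sub_div_pow_le_exp_neg (le_of_abs_le ht))]
  linarith [exp_neg_mul_one_sub_sq_div_le_one_sub_div_pow ht]

theorem tendstoUniformlyOn_one_sub_div_pow_exp_neg (r : ℝ) :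
    TendstoUniformlyOn (fun (n : ℕ) (t : ℝ) => (1 - t / n) ^ n) (fun t => exp (-t)) atTop
      (Set.Icc (-r) r) := by
  rw [Metric.tendstoUniformlyOn_iff]
  intro ε hε
  have hlim : Tendsto (fun n : ℕ => r ^ 2 * exp r / n) atTop (nhds 0) :=
    tendsto_const_div_atTop_nhds_zero_nat _
  filter_upwards [hlim.eventually (gt_mem_nhds hε),
    eventually_ge_atTop ⌈r⌉₊] with n hnε hnr t ht
  have htr : |t| ≤ r := abs_le.2 ht
  have htn : |t| ≤ n := htr.trans ((Nat.le_ceil r).trans (by exact_mod_cast hnr))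
  rw [dist_comm, Real.dist_eq]
  refine (abs_one_sub_div_pow_sub_exp_neg_le htn).trans_lt (lt_of_le_of_lt ?_ hnε)
  have hsq : t ^ 2 ≤ r ^ 2 := sq_le_sq' (abs_le.1 htr).1 (abs_le.1 htr).2
  rw [div_mul_eq_mul_div]
  gcongr
  linarith [neg_abs_le t]

end Real

section SMulMul

variable {R : Type*}

/-- The `ℝ`-action is not assumed compatible with multiplication, but for the scalars `1/n` this
follows from `ℕ`-linearity of multiplication. -/
theorem inv_natCast_smul_mul [Ring R] [Module ℝ R] (n : ℕ) (a b : R) :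
    ((n : ℝ)⁻¹ • a) * b = (n : ℝ)⁻¹ • (a * b) := by
  rcases eq_or_ne (n : ℝ) 0 with hn | hn
  · simp [hn]
  calc ((n : ℝ)⁻¹ • a) * b = (n : ℝ)⁻¹ • (n : ℝ) • (((n : ℝ)⁻¹ • a) * b) := by
        rw [inv_smul_smul₀ hn]
    _ = (n : ℝ)⁻¹ • (((n : ℝ) • (n : ℝ)⁻¹ • a) * b) := by
        rw [Nat.cast_smul_eq_nsmul, Nat.cast_smul_eq_nsmul, smul_mul_assoc n]
    _ = (n : ℝ)⁻¹ • (a * b) := by rw [smul_inv_smul₀ hn]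

variable [CommRing R] [Module ℝ R] {r : ℝ}

theorem pow_smul_mul_of_smul_mul (H : ∀ a b : R, (r • a) * b = r • (a * b)) (i : ℕ) (a b : R) :
    (r ^ i • a) * b = r ^ i • (a * b) := by
  induction i generalizing a with
  | zero => simp
  | succ i ih => rw [pow_succ, mul_smul, ih, H, ← mul_smul]

theorem smul_pow_of_smul_mul (H : ∀ a b : R, (r • a) * b = r • (a * b)) (a : R) (i : ℕ) :
    (r • a) ^ i = r ^ i • a ^ i := by
  induction i with
  | zero => simp
  | succ i ih =>
    rw [pow_succ, ih, pow_smul_mul_of_smul_mul H, mul_comm, H, mul_comm, ← mul_smul, ← pow_succ,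
      ← pow_succ]

theorem one_sub_inv_natCast_smul_pow (n : ℕ) (g : R) :
    (1 - (n : ℝ)⁻¹ • g) ^ n =
      ∑ i ∈ Finset.range (n + 1), ((n.choose i : ℝ) * (-(n : ℝ)⁻¹) ^ i) • g ^ i := by
  have H : ∀ a b : R, ((-(n : ℝ)⁻¹) • a) * b = (-(n : ℝ)⁻¹) • (a * b) := fun a b => by
    rw [neg_smul, neg_smul, neg_mul, inv_natCast_smul_mul]
  rw [sub_eq_neg_add, ← neg_smul, add_pow]
  refine Finset.sum_congr rfl fun i _ => ?_
  rw [one_pow, mul_one, smul_pow_of_smul_mul H, mul_comm, mul_smul, Nat.cast_smul_eq_nsmul,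
    nsmul_eq_mul]

end SMulMul

theorem exp_neg_limit_general {A : Type*} [FRieszSpace A]
    (g : A)
    (h : A) (hh : IsExpNeg g h) :
    EUnifTendsTo (fun n => (1 - (n:ℝ)⁻¹ • g) ^ n) h := by
  have hpoly : ∀ ε : ℝ, 0 < ε → ∃ N : ℕ, ∀ k ≥ N, ∀ t ∈ Set.Icc (-1:ℝ) 1,
      |(∑ i ∈ range (k + 1), ((k.choose i : ℝ) * (-(k:ℝ)⁻¹) ^ i) * t ^ i) - Real.exp (-t)| ≤ ε := by
    intro ε hε
    obtain ⟨N, hN⟩ := eventually_atTop.1 <|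
      Metric.tendstoUniformlyOn_iff.1 (Real.tendstoUniformlyOn_one_sub_div_pow_exp_neg 1) ε hε
    refine ⟨N, fun k hk t ht => ?_⟩
    have hexpand := one_sub_inv_natCast_smul_pow k t
    simp only [smul_eq_mul, ← div_eq_inv_mul] at hexpand
    rw [← hexpand, abs_sub_comm, ← Real.dist_eq]
    exact (hN k hk t ht).le
  simpa only [one_sub_inv_natCast_smul_pow] using hh (· + 1) _ hpoly

/-- For `g` in the principal ideal generated by the unit (`|g| ≤ e`),
`(e - g/n)^n → e^{-g}` `e`-uniformly, where `e^{-g}` is given by the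
functional calculus for `t ↦ exp(-t)` on `[-1,1]`. -/
theorem exp_neg_limit {A : Type*} [FRieszSpace A]
    (g : A) (hg : |g| ≤ 1)
    (h : A) (hh : IsExpNeg g h) :
    EUnifTendsTo (fun n => (1 - (n:ℝ)⁻¹ • g) ^ n) h :=
  exp_neg_limit_general g h hh
end

section
/- If T is a conditional expectation on a Dedekind complete Riesz space E with weak order unit, B is the band generated by 0 ≤ g ∈ R(T), and P is the band projection onto B, then TP = PT. -/
/-!
Write `B` for the band generated by `g`. For `x ≥ 0`, `P x` is the supremum of the increasing
truncations `x ⊓ n • g`, so by order continuity `T (P x)` is the supremum of the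
`T (x ⊓ n • g) ≤ n • g`; hence `T` maps `B` into `B`. Since `R(T)` is a Riesz subspace
containing `e` and `g`, `T` fixes every `e ⊓ n • g`, hence `P e`, hence `f = e - P e ∈ Bᵈ`.
A positive `h ∈ Bᵈ` is disjoint from `P e`, so, `e` being a weak unit, `h` is the supremum of
the `h ⊓ n • f`, and `T h` is the supremum of elements below multiples of `f`; hence `T` maps
`Bᵈ` into `Bᵈ`. Splitting `x = P x + (x - P x)` gives `P T = T P` on the positive cone, hence
everywhere.
-/

section Lattice

variable {A : Type*} [AddMonoid A] [Lattice A]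

lemma inf_eq_zero_of_le {a b c : A} (ha : 0 ≤ a) (hc : 0 ≤ c) (hab : a ≤ b)
    (hcb : c ⊓ b = 0) : c ⊓ a = 0 :=
  le_antisymm (hcb ▸ inf_le_inf_left c hab) (le_inf hc ha)

/-- For `b ≥ 0`, the supremum of the truncations of `x ≥ 0` is its component in the band
generated by `b`. -/
def truncations (x b : A) : Set A := {y | ∃ n : ℕ, y = x ⊓ (n • b)}

lemma truncations_nonempty (x b : A) : (truncations x b).Nonempty :=
  ⟨_, 0, rfl⟩

end Lattice

section LatticeOrderedGroup

variable {A : Type*} [AddCommGroup A] [Lattice A] [IsOrderedAddMonoid A]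

/-- Infinite distributivity, which fails in general lattices. -/
lemma IsLUB.inf_right {S : Set A} {a : A} (hS : IsLUB S a) (b : A) :
    IsLUB ((· ⊓ b) '' S) (a ⊓ b) := by
  refine ⟨?_, fun u hu => ?_⟩
  · rintro _ ⟨s, hs, rfl⟩
    exact inf_le_inf_right b (hS.1 hs)
  -- `s ⊓ b + s ⊔ b = s + b` turns the upper bound `u` of the `s ⊓ b` into one of the `s`.
  have hbound : ∀ s ∈ S, s ≤ u + a ⊔ b - b := fun s hs => by
    rw [le_sub_iff_add_le, ← inf_add_sup s b]
    exact add_le_add (hu ⟨s, hs, rfl⟩) (sup_le_sup_right (hS.1 hs) b)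
  have ha : a ⊓ b + a ⊔ b ≤ u + a ⊔ b := by
    rw [inf_add_sup]
    exact le_sub_iff_add_le.mp (hS.2 hbound)
  exact le_of_add_le_add_right ha

lemma inf_eq_zero_of_isLUB {S : Set A} {a b : A} (hS : IsLUB S a) (hne : S.Nonempty)
    (h : ∀ s ∈ S, b ⊓ s = 0) : b ⊓ a = 0 := by
  have himage : (· ⊓ b) '' S = {0} := by
    rw [Set.image_congr fun s hs => (inf_comm s b).trans (h s hs), hne.image_const]
  rw [inf_comm]
  exact (hS.inf_right b).unique (himage ▸ isLUB_singleton)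

lemma inf_add_le_inf_add_inf {a b c : A} (ha : 0 ≤ a) (hb : 0 ≤ b) (hc : 0 ≤ c) :
    a ⊓ (b + c) ≤ a ⊓ b + a ⊓ c := by
  have hle_a : a ⊓ (b + c) ≤ a ⊓ b + a :=
    inf_le_left.trans (le_add_of_nonneg_left (le_inf ha hb))
  have hle_c : a ⊓ (b + c) ≤ a ⊓ b + c :=
    calc a ⊓ (b + c) ≤ (a + c) ⊓ (b + c) := inf_le_inf_right _ (le_add_of_nonneg_right hc)
      _ = a ⊓ b + c := (inf_add a b c).symm
  exact sub_le_iff_le_add'.mp (le_inf (sub_le_iff_le_add'.mpr hle_a) (sub_le_iff_le_add'.mpr hle_c))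

lemma inf_nsmul_eq_zero {a b : A} (ha : 0 ≤ a) (hb : 0 ≤ b) (hab : a ⊓ b = 0) (n : ℕ) :
    a ⊓ n • b = 0 := by
  induction n with
  | zero => simpa using inf_eq_right.mpr ha
  | succ n ih =>
    refine le_antisymm ?_ (le_inf ha (nsmul_nonneg hb _))
    simpa [succ_nsmul, ih, hab] using inf_add_le_inf_add_inf ha (nsmul_nonneg hb n) hb

lemma inf_add_eq_inf_of_inf_eq_zero {a b c : A} (ha : 0 ≤ a) (hb : 0 ≤ b) (hc : 0 ≤ c)
    (hac : a ⊓ c = 0) : a ⊓ (b + c) = a ⊓ b :=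
  le_antisymm (by simpa [hac] using inf_add_le_inf_add_inf ha hb hc)
    (inf_le_inf_left a (le_add_of_nonneg_right hc))

lemma directedOn_truncations (x : A) {b : A} (hb : 0 ≤ b) :
    DirectedOn (· ≤ ·) (truncations x b) := by
  rintro _ ⟨n, rfl⟩ _ ⟨m, rfl⟩
  exact ⟨x ⊓ (max n m • b), ⟨max n m, rfl⟩,
    inf_le_inf_left x (nsmul_le_nsmul_left hb (le_max_left n m)),
    inf_le_inf_left x (nsmul_le_nsmul_left hb (le_max_right n m))⟩

lemma eq_zero_of_forall_nsmul_le
    (hDC : ∀ S : Set A, S.Nonempty → BddAbove S → ∃ a, IsLUB S a) {c h : A} (hc : 0 ≤ c)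
    (hch : ∀ n : ℕ, n • c ≤ h) : c = 0 := by
  obtain ⟨s, hs⟩ := hDC (Set.range (· • c)) (Set.range_nonempty _)
    ⟨h, Set.forall_mem_range.2 hch⟩
  have hsc : s ≤ s - c := hs.2 <| Set.forall_mem_range.2 fun n =>
    le_sub_iff_add_le.2 (succ_nsmul c n ▸ hs.1 (Set.mem_range_self (n + 1)))
  exact le_antisymm (by simpa using hsc) hc

lemma isLUB_truncations_of_weak_unit
    (hDC : ∀ S : Set A, S.Nonempty → BddAbove S → ∃ a, IsLUB S a) {e : A} (he : 0 ≤ e)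
    (hwu : ∀ x : A, |x| ⊓ e = 0 → x = 0) {h : A} (hh : 0 ≤ h) :
    IsLUB (truncations h e) h := by
  obtain ⟨a, ha⟩ := hDC _ (truncations_nonempty h e)
    ⟨h, by rintro _ ⟨n, rfl⟩; exact inf_le_left⟩
  have hah : a ≤ h := ha.2 (by rintro _ ⟨n, rfl⟩; exact inf_le_left)
  set c := (h - a) ⊓ e
  have hc : c = 0 := by
    refine eq_zero_of_forall_nsmul_le hDC (h := h) (le_inf (sub_nonneg.2 hah) he) fun n => ?_
    induction n with
    | zero => simpa using hh
    | succ n ih =>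
      have hna : n • c ≤ a :=
        (le_inf ih (nsmul_le_nsmul_right inf_le_right n)).trans (ha.1 ⟨n, rfl⟩)
      calc (n + 1) • c = n • c + c := succ_nsmul c n
        _ ≤ a + (h - a) := add_le_add hna inf_le_left
        _ = h := add_sub_cancel a h
  obtain rfl : a = h := (sub_eq_zero.1 (hwu _ (by rwa [abs_of_nonneg (sub_nonneg.2 hah)]))).symm
  exact ha

end LatticeOrderedGroup

lemma LinearMap.ext_of_nonneg {R M N : Type*} [Semiring R] [AddCommGroup M] [Lattice M]
    [IsOrderedAddMonoid M] [AddCommGroup N] [Module R M] [Module R N] {f g : M →ₗ[R] N}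
    (h : ∀ x, 0 ≤ x → f x = g x) : f = g :=
  LinearMap.ext fun x => by
    rw [← posPart_sub_negPart x, map_sub, map_sub, h _ (posPart_nonneg x),
      h _ (negPart_nonneg x)]

lemma LinearMap.monotone_of_map_nonneg {R M N : Type*} [Semiring R] [AddCommGroup M]
    [PartialOrder M] [IsOrderedAddMonoid M] [AddCommGroup N] [PartialOrder N]
    [IsOrderedAddMonoid N] [Module R M] [Module R N] (f : M →ₗ[R] N)
    (hf : ∀ x, 0 ≤ x → 0 ≤ f x) : Monotone f :=
  (PositiveLinearMap.mk₀ f hf).monotone'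

section RangeRieszSubspace

variable {𝕜 A : Type*} [DivisionSemiring 𝕜] [NeZero (2 : 𝕜)] [AddCommGroup A] [Lattice A]
  [IsOrderedAddMonoid A] [Module 𝕜 A] {T : A →ₗ[𝕜] A}

lemma map_inf_eq_of_map_eq (hTproj : ∀ x, T (T x) = T x)
    (hTrange_abs : ∀ x, ∃ y, T y = |T x|) {a b : A} (ha : T a = a) (hb : T b = b) :
    T (a ⊓ b) = a ⊓ b := by
  obtain ⟨y, hy⟩ := hTrange_abs (b - a)
  have hz : T ((2⁻¹ : 𝕜) • (a + b - y)) = a ⊓ b := by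
    rw [map_smul, map_sub, map_add, ha, hb, hy, map_sub, ha, hb,
      ← inf_eq_half_smul_add_sub_abs_sub' 𝕜]
  rw [← hz, hTproj]

lemma map_eq_of_isLUB_truncations (hTproj : ∀ x, T (T x) = T x)
    (hTrange_abs : ∀ x, ∃ y, T y = |T x|) (hT : ScottContinuous T) {a b w : A} (ha : T a = a)
    (hb : T b = b) (hb0 : 0 ≤ b) (hw : IsLUB (truncations a b) w) : T w = w := by
  have hfix : ∀ y ∈ truncations a b, T y = y := by
    rintro _ ⟨n, rfl⟩
    exact map_inf_eq_of_map_eq hTproj hTrange_abs ha (by rw [map_nsmul, hb])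
  have hTw := hT (truncations_nonempty a b) (directedOn_truncations a hb0) hw
  rw [Set.image_congr hfix, Set.image_id'] at hTw
  exact hTw.unique hw

end RangeRieszSubspace

section BandProjection

variable {R A : Type*} [Semiring R] [AddCommGroup A] [Lattice A] [Module R A] {g : A}
  {P : A →ₗ[R] A}

lemma band_proj_eq_self_of_le_nsmul (hPord : ∀ x : A, 0 ≤ x → 0 ≤ P x ∧ P x ≤ x)
    (hPband : ∀ x : A, 0 ≤ x → IsLUB (truncations x g) (P x)) {y : A} (hy : 0 ≤ y) {n : ℕ}
    (hyn : y ≤ n • g) : P y = y :=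
  le_antisymm (hPord y hy).2 (by simpa [inf_eq_left.2 hyn] using (hPband y hy).1 ⟨n, rfl⟩)

lemma inf_eq_zero_of_band_proj_eq_zero
    (hPband : ∀ x : A, 0 ≤ x → IsLUB (truncations x g) (P x)) (hg : 0 ≤ g) {x : A}
    (hx : 0 ≤ x) (hPx : P x = 0) : x ⊓ g = 0 :=
  le_antisymm (by simpa [hPx] using (hPband x hx).1 ⟨1, rfl⟩) (le_inf hx hg)

variable [IsOrderedAddMonoid A]

lemma band_proj_eq_zero_of_inf_eq_zero (hPord : ∀ x : A, 0 ≤ x → 0 ≤ P x ∧ P x ≤ x)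
    (hPband : ∀ x : A, 0 ≤ x → IsLUB (truncations x g) (P x)) (hg : 0 ≤ g) {x : A}
    (hx : 0 ≤ x) (hxg : x ⊓ g = 0) : P x = 0 :=
  le_antisymm ((hPband x hx).2 (by rintro _ ⟨n, rfl⟩; rw [inf_nsmul_eq_zero hx hg hxg n]))
    (hPord x hx).1

variable {T : A →ₗ[R] A}

lemma band_proj_map_band_proj (hPord : ∀ x : A, 0 ≤ x → 0 ≤ P x ∧ P x ≤ x)
    (hPband : ∀ x : A, 0 ≤ x → IsLUB (truncations x g) (P x)) (hT : ScottContinuous T)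
    (hTpos : ∀ x : A, 0 ≤ x → 0 ≤ T x) (hg : 0 ≤ g) (hgT : T g = g) {x : A}
    (hx : 0 ≤ x) : P (T (P x)) = T (P x) := by
  have hTlub : IsLUB (T '' truncations x g) (T (P x)) :=
    hT (truncations_nonempty x g) (directedOn_truncations x hg) (hPband x hx)
  refine le_antisymm (hPord _ (hTpos _ (hPord x hx).1)).2 (hTlub.2 ?_)
  rintro _ ⟨_, ⟨n, rfl⟩, rfl⟩
  have hle : T (x ⊓ n • g) ≤ n • g := by
    simpa [hgT] using T.monotone_of_map_nonneg hTpos (inf_le_right : x ⊓ n • g ≤ n • g)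
  calc T (x ⊓ n • g)
      = P (T (x ⊓ n • g)) :=
        (band_proj_eq_self_of_le_nsmul hPord hPband
          (hTpos _ (le_inf hx (nsmul_nonneg hg n))) hle).symm
    _ ≤ P (T (P x)) :=
        P.monotone_of_map_nonneg (fun y hy => (hPord y hy).1) (hTlub.1 ⟨_, ⟨n, rfl⟩, rfl⟩)

lemma band_proj_map_eq_zero_of_band_proj_eq_zero (hPproj : ∀ x, P (P x) = P x)
    (hPord : ∀ x : A, 0 ≤ x → 0 ≤ P x ∧ P x ≤ x)
    (hPband : ∀ x : A, 0 ≤ x → IsLUB (truncations x g) (P x)) (hT : ScottContinuous T)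
    (hTpos : ∀ x : A, 0 ≤ x → 0 ≤ T x) (hg : 0 ≤ g) {e : A} (he : 0 ≤ e)
    (hunit : ∀ h : A, 0 ≤ h → IsLUB (truncations h e) h) (hTe : T e = e)
    (hTPe : T (P e) = P e) {h : A} (hh : 0 ≤ h) (hPh : P h = 0) : P (T h) = 0 := by
  have hPe : 0 ≤ P e := (hPord e he).1
  set f := e - P e
  have hf : 0 ≤ f := sub_nonneg.2 (hPord e he).2
  have hTf : T f = f := by rw [map_sub, hTe, hTPe]
  have hfg : f ⊓ g = 0 := inf_eq_zero_of_band_proj_eq_zero hPband hg hf (by simp [f, hPproj])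
  have hhg : h ⊓ g = 0 := inf_eq_zero_of_band_proj_eq_zero hPband hg hh hPh
  have hhPe : h ⊓ P e = 0 := inf_eq_zero_of_isLUB (hPband e he) (truncations_nonempty e g) <| by
    rintro _ ⟨n, rfl⟩
    exact inf_eq_zero_of_le (le_inf he (nsmul_nonneg hg n)) hh inf_le_right
      (inf_nsmul_eq_zero hh hg hhg n)
  have htrunc : truncations h e = truncations h f := by
    have hinf (n : ℕ) : h ⊓ n • e = h ⊓ n • f := by
      rw [← inf_add_eq_inf_of_inf_eq_zero hh (nsmul_nonneg hf n) (nsmul_nonneg hPe n)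
        (inf_nsmul_eq_zero hh hPe hhPe n), ← nsmul_add, sub_add_cancel]
    simp only [truncations, hinf]
  have hTlub : IsLUB (T '' truncations h f) (T h) :=
    hT (truncations_nonempty h f) (directedOn_truncations h hf) (htrunc ▸ hunit h hh)
  have hgTh : g ⊓ T h = 0 := inf_eq_zero_of_isLUB hTlub ((truncations_nonempty h f).image T) <| by
    rintro _ ⟨_, ⟨n, rfl⟩, rfl⟩
    have hle : T (h ⊓ n • f) ≤ n • f := by
      simpa [hTf] using T.monotone_of_map_nonneg hTpos (inf_le_right : h ⊓ n • f ≤ n • f)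
    exact inf_eq_zero_of_le (hTpos _ (le_inf hh (nsmul_nonneg hf n))) hg hle
      (inf_nsmul_eq_zero hg hf (inf_comm g f ▸ hfg) n)
  exact band_proj_eq_zero_of_inf_eq_zero hPord hPband hg (hTpos h hh) (inf_comm g _ ▸ hgTh)

end BandProjection

/-- If `T` is a conditional expectation on a Dedekind complete Riesz space `E`
with weak order unit `e`, `B` is the band generated by `0 ≤ g ∈ R(T)`, and `P`
is the band projection onto `B`, then `TP = PT`. -/
theorem condexp_commutes_band_proj {A : Type*} [AddCommGroup A] [Lattice A]
    [Module ℝ A] [CovariantClass A A (· + ·) (· ≤ ·)]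
    (e : A) (he : 0 < e) (hwu : ∀ x : A, |x| ⊓ e = 0 → x = 0)
    (hDC : ∀ S : Set A, S.Nonempty → BddAbove S → ∃ a, IsLUB S a)
    (T : A →ₗ[ℝ] A)
    (hTpos : ∀ x : A, 0 ≤ x → 0 ≤ T x)
    (hTproj : ∀ x, T (T x) = T x)
    (hTe : T e = e)
    (hTrange_abs : ∀ x, ∃ y, T y = |T x|)
    (hTcont : ∀ (S : Set A) (a : A), S.Nonempty → DirectedOn (· ≤ ·) S →
        IsLUB S a → IsLUB (T '' S) (T a))
    (g : A) (hg : 0 ≤ g) (hgR : T g = g)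
    (P : A →ₗ[ℝ] A)
    (hPproj : ∀ x, P (P x) = P x)
    (hPord : ∀ x : A, 0 ≤ x → 0 ≤ P x ∧ P x ≤ x)
    (hPband : ∀ x : A, 0 ≤ x → IsLUB {y | ∃ n : ℕ, y = x ⊓ (n • g)} (P x)) :
    T.comp P = P.comp T := by
  have : IsOrderedAddMonoid A := { add_le_add_left := fun _ _ h c => add_le_add_left h c }
  have hT : ScottContinuous T := fun S hne hdir a ha => hTcont S a hne hdir ha
  have hTPe : T (P e) = P e :=
    map_eq_of_isLUB_truncations hTproj hTrange_abs hT hTe hgR hg (hPband e he.le)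
  have hunit (h : A) (hh : 0 ≤ h) : IsLUB (truncations h e) h :=
    isLUB_truncations_of_weak_unit hDC he.le hwu hh
  refine (LinearMap.ext_of_nonneg fun x hx => ?_).symm
  have hxPx : 0 ≤ x - P x := sub_nonneg.2 (hPord x hx).2
  calc P (T x) = P (T (P x)) + P (T (x - P x)) := by rw [← map_add, ← map_add, add_sub_cancel]
    _ = T (P x) := by
      rw [band_proj_map_band_proj hPord hPband hT hTpos hg hgR hx,
        band_proj_map_eq_zero_of_band_proj_eq_zero hPproj hPord hPband hT hTpos hg he.le hunit
          hTe hTPe hxPx (by rw [map_sub, hPproj, sub_self]), add_zero]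
end
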